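/- For every integer k > 1, there exists at least one k-translatable pentagonal quasigroup; one can take n = k⁴ − 2k³ + 4k² − 3k + 1, a = (−k³ + k² − 3k + 1) mod n, with multiplication x·y = (ax + (1−a)y) mod n. -/

import Mathlib

/-- A pentagonal quasigroup: a quasigroup (unique left/right division)
satisfying idempotency, mediality and the pentagonal identity. -/
def IsPentagonal {Q : Type*} (m : Q → Q → Q) : Prop :=
  (∀ a b : Q, ∃! x, m a x = b) ∧
  (∀ a b : Q, ∃! x, m x a = b) ∧
  (∀ x, m x x = x) ∧
  (∀ x y z u, m (m x y) (m z u) = m (m x z) (m y u)) ∧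
  (∀ x y, m (m (m (m x y) x) y) x = y)

/-- A groupoid on `ZMod n` is `k`-translatable if each row of the Cayley table is
the cyclic shift by `k` of the previous row, i.e. `i·j = (i+1)·(j+k)`. -/
def kTranslatable (n k : ℕ) (m : ZMod n → ZMod n → ZMod n) : Prop :=
  ∀ i j : ZMod n, m i j = m (i + 1) (j + (k : ZMod n))

/-!
For the affine operation `x·y = a x + (1 - a) y` idempotency and mediality are ring identities,
the pentagonal identity reduces to `P(a) = a⁴ - a³ + a² - a + 1 = 0`, and `P(a) = 0` alone makes
`a` and `1 - a` units. `k`-translatability is `a + k (1 - a) = 0`, i.e. `a (k - 1) = k`, which also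
makes `k - 1` a unit; so `a = k / (k - 1)` and
`(k - 1)⁴ P(a) = k⁴ - k³(k-1) + k²(k-1)² - k(k-1)³ + (k-1)⁴ = k⁴ - 2k³ + 4k² - 3k + 1 = n`,
which vanishes in `ZMod n`. The chosen `a = -k³ + k² - 3k + 1` satisfies `a + k (1 - a) = n`
identically.
-/

theorem existsUnique_add_mul_eq {R : Type*} [Ring R] {u : R} (hu : IsUnit u) (c b : R) :
    ∃! x, c + u * x = b :=
  ((AddGroup.addLeft_bijective c).comp (IsUnit.isUnit_iff_mulLeft_bijective.mp hu)).existsUnique b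

section Affine

variable {R : Type*} [CommRing R]

theorem isUnit_of_pentagonal_root {a : R} (hP : a ^ 4 - a ^ 3 + a ^ 2 - a + 1 = 0) :
    IsUnit a :=
  IsUnit.of_mul_eq_one (-(a ^ 3 - a ^ 2 + a - 1)) (by linear_combination -hP)

theorem isUnit_one_sub_of_pentagonal_root {a : R} (hP : a ^ 4 - a ^ 3 + a ^ 2 - a + 1 = 0) :
    IsUnit (1 - a) :=
  -- `P(1 - b) = b (b³ - 3b² + 4b - 2) + 1`
  IsUnit.of_mul_eq_one (-((1 - a) ^ 3 - 3 * (1 - a) ^ 2 + 4 * (1 - a) - 2))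
    (by linear_combination -hP)

theorem isPentagonal_affine {a : R} (hP : a ^ 4 - a ^ 3 + a ^ 2 - a + 1 = 0) :
    IsPentagonal (fun x y : R => a * x + (1 - a) * y) := by
  refine ⟨fun c b => existsUnique_add_mul_eq (isUnit_one_sub_of_pentagonal_root hP) (a * c) b,
    fun c b => ?_, fun x => by ring, fun x y z u => by ring,
    fun x y => by linear_combination (x - y) * hP⟩
  simpa only [add_comm] using existsUnique_add_mul_eq (isUnit_of_pentagonal_root hP) ((1 - a) * c) b

theorem isUnit_sub_one_of_translatable {a k : R} (h : a + k * (1 - a) = 0) :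
    IsUnit (k - 1) :=
  IsUnit.of_mul_eq_one_right (a - 1) (by linear_combination -h)

theorem pentagonal_root_of_translatable {a k : R} (h : a + k * (1 - a) = 0)
    (hn : k ^ 4 - 2 * k ^ 3 + 4 * k ^ 2 - 3 * k + 1 = 0) :
    a ^ 4 - a ^ 3 + a ^ 2 - a + 1 = 0 := by
  have hak : a * (k - 1) = k := by linear_combination -h
  refine (((isUnit_sub_one_of_translatable h).pow 4).mul_right_eq_zero).mp ?_
  calc (k - 1) ^ 4 * (a ^ 4 - a ^ 3 + a ^ 2 - a + 1)
      = (a * (k - 1)) ^ 4 - (a * (k - 1)) ^ 3 * (k - 1) + (a * (k - 1)) ^ 2 * (k - 1) ^ 2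
          - a * (k - 1) * (k - 1) ^ 3 + (k - 1) ^ 4 := by ring
    _ = k ^ 4 - 2 * k ^ 3 + 4 * k ^ 2 - 3 * k + 1 := by rw [hak]; ring
    _ = 0 := hn

end Affine

theorem kTranslatable_affine_iff {n k : ℕ} (a : ZMod n) :
    kTranslatable n k (fun x y : ZMod n => a * x + (1 - a) * y) ↔ a + k * (1 - a) = 0 :=
  ⟨fun h => by linear_combination -(h 0 0), fun h _ _ => by linear_combination -h⟩

theorem pentagonal_translatable_modulus_nonneg (k : ℤ) :
    0 ≤ k ^ 4 - 2 * k ^ 3 + 4 * k ^ 2 - 3 * k + 1 := by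
  -- it equals `(k (k - 1))² + 3 k (k - 1) + 1`
  nlinarith [sq_nonneg (k * (k - 1)), sq_nonneg (2 * k - 1)]

theorem exists_k_translatable_pentagonal_general (k : ℕ) :
    ∃ (n : ℕ) (a : ZMod n),
      (n : ℤ) = (k : ℤ) ^ 4 - 2 * (k : ℤ) ^ 3 + 4 * (k : ℤ) ^ 2 - 3 * (k : ℤ) + 1 ∧
      a = ((-(k : ℤ) ^ 3 + (k : ℤ) ^ 2 - 3 * (k : ℤ) + 1 : ℤ) : ZMod n) ∧
      IsPentagonal (fun x y : ZMod n => a * x + (1 - a) * y) ∧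
      kTranslatable n k (fun x y : ZMod n => a * x + (1 - a) * y) := by
  obtain ⟨n, hn⟩ := Int.eq_ofNat_of_zero_le (pentagonal_translatable_modulus_nonneg k)
  have hn0 : (k : ZMod n) ^ 4 - 2 * (k : ZMod n) ^ 3 + 4 * (k : ZMod n) ^ 2 - 3 * k + 1 = 0 := by
    have := congrArg (Int.cast : ℤ → ZMod n) hn
    push_cast at this
    rwa [ZMod.natCast_self] at this
  set a : ZMod n := ((-(k : ℤ) ^ 3 + (k : ℤ) ^ 2 - 3 * (k : ℤ) + 1 : ℤ) : ZMod n) with ha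
  have htr : a + k * (1 - a) = 0 := by
    rw [ha]; push_cast; linear_combination hn0
  exact ⟨n, a, hn.symm, rfl, isPentagonal_affine (pentagonal_root_of_translatable htr hn0),
    (kTranslatable_affine_iff a).mpr htr⟩

theorem exists_k_translatable_pentagonal (k : ℕ) (hk : 1 < k) :
    ∃ (n : ℕ) (a : ZMod n),
      (n : ℤ) = (k : ℤ) ^ 4 - 2 * (k : ℤ) ^ 3 + 4 * (k : ℤ) ^ 2 - 3 * (k : ℤ) + 1 ∧
      a = ((-(k : ℤ) ^ 3 + (k : ℤ) ^ 2 - 3 * (k : ℤ) + 1 : ℤ) : ZMod n) ∧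
      IsPentagonal (fun x y : ZMod n => a * x + (1 - a) * y) ∧
      kTranslatable n k (fun x y : ZMod n => a * x + (1 - a) * y) :=
  exists_k_translatable_pentagonal_general k
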